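/- (Theorem 6.15 and Proposition 6.16(P3): basis-independence of the trace.) Let T : H →L[K] H be of trace class and let U : H →L[K] H be unitary (surjective, isometric, inner-product-preserving). Then the series ∑ m, ⟪U (e m), T (U (e m))⟫ converges and its sum equals the trace computed in the standard basis: HasSum (fun m => ⟪U (e m), T (U (e m))⟫) (∑' m, (T (e m)) m). -/

import Mathlib

open Filter

noncomputable section

variable (K : Type*) [NontriviallyNormedField K] [IsUltrametricDist K]
  [CompleteSpace K] [StarRing K] [NormedStarGroup K]

/-- The p-adic coordinate Hilbert space: zero-convergent sequences in `K` with sup norm. -/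
abbrev H := ZeroAtInftyContinuousMap ℕ K

/-- The standard basis vectors of `H K`. -/
def e (n : ℕ) : H K where
  toFun := fun m => if m = n then 1 else 0
  continuous_toFun := continuous_of_discreteTopology
  zero_at_infty' := by
    rw [cocompact_eq_atTop (α := ℕ)]
    refine Filter.Tendsto.congr' ?_ tendsto_const_nhds
    filter_upwards [Filter.eventually_gt_atTop n] with m hm
    simp [Nat.ne_of_gt hm]

/-- The canonical inner product on `H K`: `⟪x, y⟫ = ∑' i, star (x i) * y i`. -/
def inner' (x y : H K) : K := ∑' i, star (x i) * y i

/-- A bounded operator is of trace class if its matrix entries vanish along the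
cofinite filter of `ℕ × ℕ`. -/
def IsTraceClass (T : H K →L[K] H K) : Prop :=
  Tendsto (fun q : ℕ × ℕ => (T (e K q.2)) q.1) Filter.cofinite (nhds 0)

/-!
Write `u m j = (U (e m)) j` and `t j i = (T (e i)) j`. Since `U` is surjective and preserves
`inner'`, the row `m ↦ u m j` is the coordinate sequence of a preimage of `e j` (up to `star`), so
rows lie in `C₀` and are orthonormal. Hence the triple family `t j i * (star (u m j) * u m i)` tends
to zero along the cofinite filter of `(ℕ × ℕ) × ℕ`, so it is summable in the complete ultrametric
field `K`, and it may be summed in either order: over `(j, i)` first it gives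
`inner' (U (e m)) (T (U (e m)))`, over `m` first it gives `t j i` on the diagonal and `0` off it.
-/

open Topology
open scoped BoundedContinuousFunction ZeroAtInfty

instance BoundedContinuousFunction.isUltrametricDist {α β : Type*} [TopologicalSpace α]
    [PseudoMetricSpace β] [IsUltrametricDist β] : IsUltrametricDist (α →ᵇ β) where
  dist_triangle_max f g h := by
    rw [BoundedContinuousFunction.dist_le (by positivity)]
    exact fun x ↦ (dist_triangle_max (f x) (g x) (h x)).trans
      (max_le_max (f.dist_coe_le_dist x) (g.dist_coe_le_dist x))

instance ZeroAtInftyContinuousMap.isUltrametricDist {α β : Type*} [TopologicalSpace α]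
    [MetricSpace β] [Zero β] [IsUltrametricDist β] : IsUltrametricDist C₀(α, β) where
  dist_triangle_max f g h := by
    simpa only [← ZeroAtInftyContinuousMap.dist_toBCF_eq_dist] using
      dist_triangle_max f.toBCF g.toBCF h.toBCF

namespace ZeroAtInftyContinuousMap

variable {α β : Type*} [TopologicalSpace α] [NormedAddCommGroup β]

theorem norm_apply_le (f : C₀(α, β)) (a : α) : ‖f a‖ ≤ ‖f‖ :=
  norm_toBCF_eq_norm (f := f) ▸ f.toBCF.norm_coe_le_norm a

theorem norm_le_of_forall_norm_apply_le (f : C₀(α, β)) {C : ℝ} (hC : 0 ≤ C)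
    (h : ∀ a, ‖f a‖ ≤ C) : ‖f‖ ≤ C :=
  norm_toBCF_eq_norm (f := f) ▸ (BoundedContinuousFunction.norm_le hC).mpr h

theorem tendsto_cofinite [DiscreteTopology α] (f : C₀(α, β)) :
    Tendsto f cofinite (𝓝 0) :=
  cocompact_eq_cofinite α ▸ zero_at_infty f

theorem hasSum_apply {ι : Type*} {f : ι → C₀(α, β)} {g : C₀(α, β)} (h : HasSum f g) (a : α) :
    HasSum (fun i ↦ f i a) (g a) :=
  h.map ({ toFun := fun f ↦ f a, map_zero' := rfl, map_add' := fun _ _ ↦ rfl } : C₀(α, β) →+ β)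
    ((continuous_eval_const a).comp isometry_toBCF.continuous)

end ZeroAtInftyContinuousMap

theorem tendsto_cofinite_zero_iff_finite {α E : Type*} [SeminormedAddGroup E] {f : α → E} :
    Tendsto f cofinite (𝓝 0) ↔ ∀ ε > 0, {a | ε ≤ ‖f a‖}.Finite := by
  simp only [NormedAddGroup.tendsto_nhds_zero, eventually_cofinite, not_lt]

theorem tendsto_cofinite_mul_of_bounded {α β R : Type*} [NonUnitalSeminormedRing R]
    {f : α → R} {g : α × β → R} {C : ℝ} (hf : Tendsto f cofinite (𝓝 0))
    (hgC : ∀ p, ‖g p‖ ≤ C) (hg : ∀ a, Tendsto (fun b ↦ g (a, b)) cofinite (𝓝 0)) :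
    Tendsto (fun p ↦ f p.1 * g p) cofinite (𝓝 0) := by
  simp only [tendsto_cofinite_zero_iff_finite] at hf hg ⊢
  intro ε hε
  have hgD : ∀ p, ‖g p‖ ≤ max C 1 := fun p ↦ (hgC p).trans (le_max_left _ _)
  have hD : 0 < max C 1 := lt_max_of_lt_right one_pos
  refine ((hf (ε / max C 1) (by positivity)).biUnion fun a _ ↦
    (Set.finite_singleton a).prod (hg a (ε / (‖f a‖ + 1)) (by positivity))).subset ?_
  rintro ⟨a, b⟩ hab
  have hab : ε ≤ ‖f a‖ * ‖g (a, b)‖ := hab.trans (norm_mul_le _ _)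
  refine Set.mem_biUnion (x := a) ?_ ⟨rfl, ?_⟩
  · rw [Set.mem_ofPred_eq, div_le_iff₀ hD]
    nlinarith [norm_nonneg (f a), hgD (a, b)]
  · show ε / (‖f a‖ + 1) ≤ ‖g (a, b)‖
    rw [div_le_iff₀ (by positivity)]
    nlinarith [norm_nonneg (f a), norm_nonneg (g (a, b))]

theorem hasSum_ite_diag_iff {β M : Type*} [AddCommMonoid M] [TopologicalSpace M] [DecidableEq β]
    {f : β × β → M} {a : M} :
    HasSum (fun p : β × β ↦ if p.1 = p.2 then f p else 0) a ↔ HasSum (fun b ↦ f (b, b)) a := by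
  rw [← Function.Injective.hasSum_iff (g := fun b ↦ (b, b)) (fun _ _ h ↦ congrArg Prod.fst h)]
  · simp [Function.comp_def]
  · rintro ⟨b, c⟩ hbc
    exact if_neg fun h ↦ hbc ⟨b, congrArg (Prod.mk b) h⟩

omit [IsUltrametricDist K] [CompleteSpace K] [StarRing K] [NormedStarGroup K] in
@[simp] theorem e_apply (n m : ℕ) : e K n m = if m = n then 1 else 0 := rfl

omit [IsUltrametricDist K] [CompleteSpace K] [StarRing K] [NormedStarGroup K] in
theorem norm_e_le_one (n : ℕ) : ‖e K n‖ ≤ 1 :=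
  ZeroAtInftyContinuousMap.norm_le_of_forall_norm_apply_le _ zero_le_one fun m ↦ by
    by_cases h : m = n <;> simp [h]

omit [StarRing K] [NormedStarGroup K] in
theorem hasSum_smul_e (y : H K) : HasSum (fun i ↦ y i • e K i) y := by
  have hy : Tendsto (fun i ↦ y i • e K i) cofinite (𝓝 0) :=
    squeeze_zero_norm (fun i ↦ (norm_smul_le _ _).trans (mul_le_of_le_one_right (norm_nonneg _)
      (norm_e_le_one K i))) (tendsto_zero_iff_norm_tendsto_zero.mp y.tendsto_cofinite)
  obtain ⟨z, hz⟩ := NonarchimedeanAddGroup.summable_of_tendsto_cofinite_zero hy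
  suffices z = y from this ▸ hz
  ext m
  refine (ZeroAtInftyContinuousMap.hasSum_apply hz m).unique ?_
  simpa using hasSum_single (f := fun i ↦ (y i • e K i) m) m fun i hi ↦ by simp [Ne.symm hi]

omit [StarRing K] [NormedStarGroup K] in
theorem hasSum_mul_map_e_apply (T : H K →L[K] H K) (y : H K) (j : ℕ) :
    HasSum (fun i ↦ y i * T (e K i) j) (T y j) := by
  simpa using ZeroAtInftyContinuousMap.hasSum_apply ((hasSum_smul_e K y).mapL T) j

theorem hasSum_inner' (x y : H K) : HasSum (fun i ↦ star (x i) * y i) (inner' K x y) := by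
  refine (NonarchimedeanAddGroup.summable_of_tendsto_cofinite_zero ?_).hasSum
  refine squeeze_zero_norm (fun i ↦ ?_)
    (by simpa using (tendsto_zero_iff_norm_tendsto_zero.mp y.tendsto_cofinite).const_mul ‖x‖)
  rw [norm_mul, norm_star]
  exact mul_le_mul_of_nonneg_right (x.norm_apply_le i) (norm_nonneg _)

omit [IsUltrametricDist K] [CompleteSpace K] [NormedStarGroup K] in
theorem inner'_e_left (m : ℕ) (x : H K) : inner' K (e K m) x = x m := by
  simp [inner', apply_ite star, eq_comm]

omit [IsUltrametricDist K] [CompleteSpace K] [NormedStarGroup K] in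
theorem inner'_e_right (x : H K) (j : ℕ) : inner' K x (e K j) = star (x j) := by
  simp [inner']

theorem hasSum_inner'_map_of_summable (T : H K →L[K] H K) (x : H K)
    (hs : Summable fun p : ℕ × ℕ ↦ T (e K p.2) p.1 * (star (x p.1) * x p.2)) :
    HasSum (fun p : ℕ × ℕ ↦ T (e K p.2) p.1 * (star (x p.1) * x p.2)) (inner' K x (T x)) := by
  have hrow (j : ℕ) : HasSum (fun i ↦ T (e K i) j * (star (x j) * x i)) (star (x j) * T x j) :=
    ((hasSum_mul_map_e_apply K T x j).mul_left (star (x j))).congr_fun fun i ↦ by ring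
  rw [(hasSum_inner' K x (T x)).unique (hs.hasSum.prod_fiberwise hrow)]
  exact hs.hasSum

section Unitary

variable {K} {U : H K →L[K] H K} (hUip : ∀ x y : H K, inner' K (U x) (U y) = inner' K x y)
include hUip

omit [IsUltrametricDist K] [CompleteSpace K] [NormedStarGroup K] in
theorem apply_eq_star_of_map_eq_e {v : H K} {j : ℕ} (hv : U v = e K j) (m : ℕ) :
    v m = star (U (e K m) j) := by
  rw [← inner'_e_left K m v, ← hUip, hv, inner'_e_right]

omit [IsUltrametricDist K] [CompleteSpace K] in
theorem tendsto_map_e_apply_of_surjective (hU : Function.Surjective U) (j : ℕ) :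
    Tendsto (fun m ↦ U (e K m) j) cofinite (𝓝 0) := by
  obtain ⟨v, hv⟩ := hU (e K j)
  simpa [apply_eq_star_of_map_eq_e hUip hv] using v.tendsto_cofinite.star

theorem hasSum_star_map_e_apply_mul_of_surjective (hU : Function.Surjective U) (i j : ℕ) :
    HasSum (fun m ↦ star (U (e K m) j) * U (e K m) i) (if j = i then 1 else 0) := by
  obtain ⟨v, hv⟩ := hU (e K i)
  obtain ⟨w, hw⟩ := hU (e K j)
  have h := hasSum_inner' K v w
  rw [← hUip, hv, hw, inner'_e_left, e_apply] at h
  simpa only [apply_eq_star_of_map_eq_e hUip hv, apply_eq_star_of_map_eq_e hUip hw, star_star,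
    mul_comm, eq_comm] using h

theorem IsTraceClass.summable_unitary_conj_entries {T : H K →L[K] H K} (hT : IsTraceClass K T)
    (hU : Function.Surjective U) :
    Summable fun p : (ℕ × ℕ) × ℕ ↦
      T (e K p.1.2) p.1.1 * (star (U (e K p.2) p.1.1) * U (e K p.2) p.1.2) := by
  have hUe (m j : ℕ) : ‖U (e K m) j‖ ≤ ‖U‖ :=
    ((U (e K m)).norm_apply_le j).trans
      ((U.le_opNorm_of_le (norm_e_le_one K m)).trans_eq (mul_one _))
  refine NonarchimedeanAddGroup.summable_of_tendsto_cofinite_zero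
    (tendsto_cofinite_mul_of_bounded (f := fun q : ℕ × ℕ ↦ T (e K q.2) q.1)
      (g := fun p ↦ star (U (e K p.2) p.1.1) * U (e K p.2) p.1.2) (C := ‖U‖ * ‖U‖) hT
      (fun p ↦ ?_) fun q ↦ ?_)
  · rw [norm_mul, norm_star]
    exact mul_le_mul (hUe _ _) (hUe _ _) (norm_nonneg _) (norm_nonneg U)
  · simpa using ((tendsto_map_e_apply_of_surjective hUip hU q.1).star.mul
      (tendsto_map_e_apply_of_surjective hUip hU q.2))

end Unitary

theorem stmt11 (U T : H K →L[K] H K)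
    (hUsurj : Function.Surjective U)
    (hUip : ∀ x y : H K, inner' K (U x) (U y) = inner' K x y)
    (hT : IsTraceClass K T) :
    HasSum (fun m => inner' K (U (e K m)) (T (U (e K m)))) (∑' m, (T (e K m)) m) := by
  obtain ⟨S, hS⟩ := hT.summable_unitary_conj_entries hUip hUsurj
  have hdiag : HasSum (fun n ↦ T (e K n) n) S := by
    rw [← hasSum_ite_diag_iff (f := fun q : ℕ × ℕ ↦ T (e K q.2) q.1)]
    refine hS.prod_fiberwise fun q ↦ ?_
    simpa only [mul_ite, mul_one, mul_zero] using
      (hasSum_star_map_e_apply_mul_of_surjective hUip hUsurj q.2 q.1).mul_left (T (e K q.2) q.1)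
  rw [hdiag.tsum_eq]
  refine ((Equiv.prodComm _ _).hasSum_iff.mpr hS).prod_fiberwise fun m ↦ hasSum_inner'_map_of_summable K T (U (e K m)) ?_
  exact hS.summable.comp_injective (i := fun q ↦ (q, m)) fun q q' h ↦ congrArg Prod.fst h
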